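/- Let R₃ be the 3×3 all-ones matrix and let R̂₃ be the 3×3 matrix with diagonal entries 1 and all off-diagonal entries 1/2. Then δ_T(R₃, R̂₃) = 2/3, where δ_T(M₁, M₂) := min{ q₀ + q̂₀ : Q, Q̂ positive semidefinite symmetric Toeplitz 3×3 matrices with constant diagonal entries q₀, q̂₀, satisfying M₁ + Q = M₂ + Q̂ }. Moreover the minimum is attained by Q with diagonal 1/3 and all off-diagonal entries −1/6, and Q̂ with diagonal 1/3 and all off-diagonal entries 1/3. -/

import Mathlib

open Matrix

/-- A matrix is Toeplitz if its `(i,j)` entry depends only on `i - j`. -/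
def IsToeplitz {n : ℕ} {α : Type*} (M : Matrix (Fin n) (Fin n) α) : Prop :=
  ∀ i j i' j' : Fin n, (i : ℤ) - (j : ℤ) = (i' : ℤ) - (j' : ℤ) → M i j = M i' j'

/-- The 3×3 all-ones matrix `R₃`. -/
def R3 : Matrix (Fin 3) (Fin 3) ℝ := Matrix.of fun _ _ => 1

/-- The 3×3 matrix `R̂₃` with diagonal entries `1` and off-diagonal entries `1/2`. -/
noncomputable def Rhat3 : Matrix (Fin 3) (Fin 3) ℝ := Matrix.of fun i j => if i = j then 1 else 1/2

/-- The optimal perturbation `Q` with diagonal `1/3` and off-diagonal `-1/6`. -/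
noncomputable def Qopt : Matrix (Fin 3) (Fin 3) ℝ := Matrix.of fun i j => if i = j then 1/3 else -(1/6)

/-- The optimal perturbation `Q̂` with diagonal `1/3` and off-diagonal `1/3`. -/
noncomputable def Qhatopt : Matrix (Fin 3) (Fin 3) ℝ := Matrix.of fun i j => if i = j then 1/3 else 1/3

lemma Qopt_psd : Qopt.PosSemidef := by
  rw [Matrix.posSemidef_iff_dotProduct_mulVec]
  constructor
  · ext i j
    fin_cases i <;> fin_cases j <;> simp [Qopt, Matrix.conjTranspose, Matrix.IsHermitian]
  · intro x
    have h := sq_nonneg (x 0 - x 1)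
    have h2 := sq_nonneg (x 0 - x 2)
    have h3 := sq_nonneg (x 1 - x 2)
    simp only [Qopt, dotProduct, mulVec, Fin.sum_univ_three, Matrix.of_apply, star, Fin.ext_iff]
    norm_num
    nlinarith

lemma Qhatopt_psd : Qhatopt.PosSemidef := by
  rw [Matrix.posSemidef_iff_dotProduct_mulVec]
  constructor
  · ext i j
    fin_cases i <;> fin_cases j <;> simp [Qhatopt, Matrix.conjTranspose, Matrix.IsHermitian]
  · intro x
    have h := sq_nonneg (x 0 + x 1 + x 2)
    simp only [Qhatopt, dotProduct, mulVec, Fin.sum_univ_three, Matrix.of_apply, star, Fin.ext_iff]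
    norm_num
    nlinarith

/-- The worked example: `δ_T(R₃, R̂₃) = 2/3`, defined as the minimum of
`q₀ + q̂₀` over positive semidefinite symmetric Toeplitz perturbations `Q, Q̂`
(with constant diagonals `q₀, q̂₀`) satisfying `R₃ + Q = R̂₃ + Q̂`; the minimum
is attained at `Q = Qopt` and `Q̂ = Qhatopt`. -/
theorem deltaT_R3_Rhat3_eq_two_thirds :
    IsLeast
      {x : ℝ | ∃ Q Qhat : Matrix (Fin 3) (Fin 3) ℝ,
        Q.PosSemidef ∧ IsToeplitz Q ∧ Qhat.PosSemidef ∧ IsToeplitz Qhat ∧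
        R3 + Q = Rhat3 + Qhat ∧ x = Q 0 0 + Qhat 0 0}
      (2/3) ∧
    Qopt.PosSemidef ∧ IsToeplitz Qopt ∧ Qhatopt.PosSemidef ∧ IsToeplitz Qhatopt ∧
    R3 + Qopt = Rhat3 + Qhatopt ∧ Qopt 0 0 + Qhatopt 0 0 = 2/3 := by
  have hTop : IsToeplitz Qopt := by
    intro i j i' j' h
    fin_cases i <;> fin_cases j <;> fin_cases i' <;> fin_cases j' <;>
      simp_all [Qopt]
  have hThat : IsToeplitz Qhatopt := by
    intro i j i' j' h
    fin_cases i <;> fin_cases j <;> fin_cases i' <;> fin_cases j' <;>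
      simp_all [Qhatopt]
  have heq : R3 + Qopt = Rhat3 + Qhatopt := by
    ext i j
    fin_cases i <;> fin_cases j <;> norm_num [R3, Rhat3, Qopt, Qhatopt, Fin.ext_iff]
  refine ⟨⟨⟨Qopt, Qhatopt, Qopt_psd, hTop, Qhatopt_psd, hThat, heq, by norm_num [Qopt, Qhatopt]⟩, ?_⟩,
    Qopt_psd, hTop, Qhatopt_psd, hThat, heq, by norm_num [Qopt, Qhatopt]⟩
  rintro x ⟨Q, Qhat, hQ, hQT, hQh, hQhT, hsum, rfl⟩
  -- relate Qhat to Q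
  have hdiag : Qhat 0 0 = Q 0 0 := by
    have := congrFun (congrFun hsum 0) 0
    simp [R3, Rhat3, Matrix.add_apply] at this
    linarith
  have hoff : ∀ i j : Fin 3, i ≠ j → Qhat i j = Q i j + 1/2 := by
    intro i j hij
    have := congrFun (congrFun hsum i) j
    simp [R3, Rhat3, Matrix.add_apply, hij] at this
    linarith
  -- symmetry of Q
  have hsym : ∀ i j : Fin 3, Q j i = Q i j := by
    intro i j
    have := congrFun (congrFun hQ.1 i) j
    simpa [Matrix.conjTranspose_apply] using this
  -- Toeplitz relations for Q
  have h21 : Q 2 1 = Q 1 0 := hQT 2 1 1 0 (by norm_num)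
  have h11 : Q 1 1 = Q 0 0 := hQT 1 1 0 0 (by norm_num)
  have h22 : Q 2 2 = Q 0 0 := hQT 2 2 0 0 (by norm_num)
  -- quadratic form inequalities
  have hv1 : (0:ℝ) ≤ 3 * Q 0 0 + 4 * Q 1 0 + 2 * Q 2 0 := by
    have := hQ.dotProduct_mulVec_nonneg ![1, 1, 1]
    simp [dotProduct, mulVec, Fin.sum_univ_three] at this
    have e01 := hsym 0 1
    have e02 := hsym 0 2
    have e12 := hsym 1 2
    have e12' := hQT 1 2 0 1 (by norm_num)
    linarith
  have hv2 : Q 1 0 + 1/2 ≤ Qhat 0 0 := by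
    have := hQh.dotProduct_mulVec_nonneg ![1, -1, 0]
    simp [dotProduct, mulVec, Fin.sum_univ_three] at this
    have e1 := hoff 0 1 (by decide)
    have e2 := hoff 1 0 (by decide)
    have e3 : Qhat 1 1 = Qhat 0 0 := hQhT 1 1 0 0 (by norm_num)
    have e4 := hsym 0 1
    linarith
  have hv3 : Q 2 0 + 1/2 ≤ Qhat 0 0 := by
    have := hQh.dotProduct_mulVec_nonneg ![1, 0, -1]
    simp [dotProduct, mulVec, Fin.sum_univ_three] at this
    have e1 := hoff 0 2 (by decide)
    have e2 := hoff 2 0 (by decide)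
    have e3 : Qhat 2 2 = Qhat 0 0 := hQhT 2 2 0 0 (by norm_num)
    have e4 := hsym 0 2
    linarith
  linarith
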